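/- arXiv:0810.2053 — 4 statements merged into one kernel-verified Lean document; each statement's English description precedes it below -/
import Mathlib

section
/- There exists an absolute constant c > 0 such that every finite simple d-regular graph contains a star factor in which every star has at least c·d/log d edges, for all sufficiently large d. -/
/-!
Make each vertex a center independently with probability `p = 5 log d / d`. A vertex with no
neighbouring center, or with more than `t = ⌈40 log d⌉` of them, is a bad event of probability at
most `d⁻⁵`, determined by the vertex's neighbourhood, hence dependent on at most `2d²` others; the
symmetric Lovász Local Lemma gives a set of centers avoiding all of them. Every center then has at
least `d - t` non-center neighbours and every non-center at most `t` neighbouring centers, so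
Hall's theorem, applied to `k = ⌈d / (100 log d)⌉` copies of each center (`(k + 1) t ≤ d`), hands
every center `k` private leaves; the remaining non-centers join any neighbouring center.
-/

open MeasureTheory ProbabilityTheory Finset Real unitInterval
open scoped Nat

theorem Real.pow_div_factorial_le_exp_mul_sub {x : ℝ} (hx : 0 ≤ x) (m : ℕ) :
    x ^ m / m ! ≤ exp (exp 1 * x - m) := by
  have h := Real.pow_div_factorial_le_exp _ (mul_nonneg (exp_pos 1).le hx) m
  rw [mul_pow, ← exp_nat_mul, mul_one, mul_div_assoc] at h
  rw [exp_sub, le_div_iff₀ (exp_pos _), mul_comm]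
  exact h

theorem Nat.choose_mul_pow_le_exp {p : ℝ} (hp : 0 ≤ p) (n m : ℕ) :
    n.choose m * p ^ m ≤ exp (exp 1 * (n * p) - m) := by
  calc n.choose m * p ^ m ≤ (n : ℝ) ^ m / m ! * p ^ m := by
        gcongr
        exact Nat.choose_le_pow_div m n
    _ = (n * p) ^ m / m ! := by ring
    _ ≤ _ := pow_div_factorial_le_exp_mul_sub (by positivity) m

theorem Real.log_sq_le_four_mul {x : ℝ} (hx : 1 ≤ x) : log x ^ 2 ≤ 4 * x := by
  have h := log_le_sub_one_of_pos (sqrt_pos.2 (by linarith : 0 < x))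
  rw [log_sqrt (by linarith)] at h
  nlinarith [sq_sqrt (by linarith : 0 ≤ x), sqrt_nonneg x, log_nonneg hx]

namespace LovaszLocalLemma

variable {Ω ι : Type*} [MeasurableSpace Ω] {μ : Measure Ω} [IsFiniteMeasure μ] {A : ι → Set Ω}

theorem measureReal_biInter_compl_le_add_sum [DecidableEq ι] (G F : Finset ι) :
    μ.real (⋂ j ∈ G, (A j)ᶜ) ≤
      μ.real (⋂ j ∈ F, (A j)ᶜ) + ∑ j ∈ F \ G, μ.real (A j ∩ ⋂ k ∈ G, (A k)ᶜ) := by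
  have hsub : ⋂ j ∈ G, (A j)ᶜ ⊆ (⋂ j ∈ F, (A j)ᶜ) ∪ ⋃ j ∈ F \ G, (A j ∩ ⋂ k ∈ G, (A k)ᶜ) := by
    intro ω hω
    by_cases h : ∃ j ∈ F \ G, ω ∈ A j
    · obtain ⟨j, hj, hA⟩ := h
      exact Or.inr (Set.mem_biUnion hj ⟨hA, hω⟩)
    · push Not at h
      refine Or.inl (Set.mem_iInter₂.2 fun j hj => ?_)
      by_cases hjG : j ∈ G
      · exact Set.mem_iInter₂.1 hω j hjG
      · exact h j (mem_sdiff.2 ⟨hj, hjG⟩)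
  calc μ.real (⋂ j ∈ G, (A j)ᶜ)
      ≤ μ.real ((⋂ j ∈ F, (A j)ᶜ) ∪ ⋃ j ∈ F \ G, (A j ∩ ⋂ k ∈ G, (A k)ᶜ)) := measureReal_mono hsub
    _ ≤ _ :=
      (measureReal_union_le _ _).trans (add_le_add le_rfl (measureReal_biUnion_finset_le _ _))

/-- `A i` is independent of the joint avoidance of any family of events outside `Γ i ∪ {i}`:
the consequence of mutual independence that the local lemma uses. -/
def IsDependencyGraph (μ : Measure Ω) (A : ι → Set Ω) (Γ : ι → Finset ι) : Prop :=
  ∀ i (F : Finset ι), i ∉ F → Disjoint F (Γ i) →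
    μ.real (A i ∩ ⋂ j ∈ F, (A j)ᶜ) = μ.real (A i) * μ.real (⋂ j ∈ F, (A j)ᶜ)

variable [DecidableEq ι] {Γ : ι → Finset ι} {D : ℕ}

theorem mul_measureReal_inter_biInter_compl_le (hind : IsDependencyGraph μ A Γ)
    (hΓ : ∀ i, #(Γ i) ≤ D) (hA : ∀ i, μ.real (A i) * ((D : ℝ) + 2) ^ 2 ≤ 1) (F : Finset ι) (i : ι) :
    ((D : ℝ) + 2) * μ.real (A i ∩ ⋂ j ∈ F, (A j)ᶜ) ≤ μ.real (⋂ j ∈ F, (A j)ᶜ) := by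
  -- i.e. `P(A i | ⋂ j ∈ F, (A j)ᶜ) ≤ 1 / (D + 2)`. Dropping the events of `Γ i` from `F` enlarges
  -- the conditioning event by a factor at most `(D + 2) / 2` (by induction on the dropped
  -- events), and `A i` is independent of the remaining ones.
  induction F using Finset.strongInduction generalizing i with
  | H F ih =>
  by_cases hiF : i ∈ F
  · have : A i ∩ ⋂ j ∈ F, (A j)ᶜ = ∅ :=
      Set.eq_empty_of_forall_notMem fun ω hω => Set.mem_iInter₂.1 hω.2 i hiF hω.1
    rw [this, measureReal_empty, mul_zero]
    exact measureReal_nonneg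
  set F₂ := F \ Γ i
  have hF₂ : F₂ ⊆ F := sdiff_subset
  have hleft : μ.real (A i ∩ ⋂ j ∈ F, (A j)ᶜ) ≤ μ.real (A i) * μ.real (⋂ j ∈ F₂, (A j)ᶜ) := by
    rw [← hind i F₂ (fun h => hiF (hF₂ h)) sdiff_disjoint]
    exact measureReal_mono (Set.inter_subset_inter_right _ (Set.biInter_subset_biInter_left hF₂))
  have hsum : ((D : ℝ) + 2) * ∑ j ∈ F \ F₂, μ.real (A j ∩ ⋂ k ∈ F₂, (A k)ᶜ) ≤
      D * μ.real (⋂ j ∈ F₂, (A j)ᶜ) := by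
    rw [mul_sum]
    refine (sum_le_card_nsmul _ _ _ fun j hj => ih F₂ ?_ j).trans ?_
    · exact ssubset_of_subset_of_ne hF₂ fun h => (mem_sdiff.1 hj).2 (h ▸ (mem_sdiff.1 hj).1)
    · rw [nsmul_eq_mul, sdiff_sdiff_right_self]
      refine mul_le_mul_of_nonneg_right ?_ measureReal_nonneg
      exact_mod_cast (card_le_card inter_subset_right).trans (hΓ i)
  have hF₂F : 2 * μ.real (⋂ j ∈ F₂, (A j)ᶜ) ≤ ((D : ℝ) + 2) * μ.real (⋂ j ∈ F, (A j)ᶜ) := by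
    nlinarith [measureReal_biInter_compl_le_add_sum (μ := μ) (A := A) F₂ F]
  have hP : 0 ≤ μ.real (⋂ j ∈ F, (A j)ᶜ) := measureReal_nonneg
  have hq : 0 ≤ μ.real (A i) := measureReal_nonneg
  nlinarith [hA i, mul_le_mul_of_nonneg_left hF₂F (mul_nonneg hq (by positivity : (0 : ℝ) ≤ D + 2))]

theorem measureReal_biInter_compl_pos [IsProbabilityMeasure μ] (hind : IsDependencyGraph μ A Γ)
    (hΓ : ∀ i, #(Γ i) ≤ D) (hA : ∀ i, μ.real (A i) * ((D : ℝ) + 2) ^ 2 ≤ 1) (F : Finset ι) :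
    0 < μ.real (⋂ j ∈ F, (A j)ᶜ) := by
  induction F using Finset.induction_on with
  | empty => simp
  | insert j F hj ih =>
    have hsplit : μ.real (⋂ k ∈ F, (A k)ᶜ) ≤
        μ.real (⋂ k ∈ insert j F, (A k)ᶜ) + μ.real (A j ∩ ⋂ k ∈ F, (A k)ᶜ) := by
      simpa [hj] using measureReal_biInter_compl_le_add_sum (μ := μ) (A := A) F (insert j F)
    have := mul_measureReal_inter_biInter_compl_le hind hΓ hA F j
    nlinarith [measureReal_nonneg (μ := μ) (s := A j ∩ ⋂ k ∈ F, (A k)ᶜ)]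

theorem exists_forall_notMem [Fintype ι] [IsProbabilityMeasure μ] (hind : IsDependencyGraph μ A Γ)
    (hΓ : ∀ i, #(Γ i) ≤ D) (hA : ∀ i, μ.real (A i) * ((D : ℝ) + 2) ^ 2 ≤ 1) :
    ∃ ω, ∀ i, ω ∉ A i := by
  obtain ⟨ω, hω⟩ := nonempty_of_measureReal_ne_zero
    (measureReal_biInter_compl_pos hind hΓ hA univ).ne'
  exact ⟨ω, fun i => Set.mem_iInter₂.1 hω i (mem_univ i)⟩

end LovaszLocalLemma

theorem dependsOn_biInter_compl {V α ι : Type*} [DecidableEq V] {A : ι → Set (V → α)}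
    {S : ι → Finset V} (hA : ∀ i, DependsOn (· ∈ A i) (S i : Set V)) (F : Finset ι) :
    DependsOn (· ∈ ⋂ j ∈ F, (A j)ᶜ) (F.biUnion S : Set V) := by
  intro ω ω' h
  simp only [Set.mem_iInter, Set.mem_compl_iff, eq_iff_iff]
  refine forall₂_congr fun j hj => not_congr (eq_iff_iff.1 (hA j fun v hv => h v ?_))
  exact mem_coe.2 (mem_biUnion.2 ⟨j, hj, hv⟩)

section ProductSpace

variable {V α : Type*} [Fintype V] [MeasurableSpace α] {μ : V → Measure α}
  [∀ v, IsProbabilityMeasure (μ v)]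

theorem measureReal_pi_forall_eq (s : Finset V) (a : α) :
    (Measure.pi μ).real {ω | ∀ v ∈ s, ω v = a} = ∏ v ∈ s, (μ v).real {a} := by
  classical
  have : {ω : V → α | ∀ v ∈ s, ω v = a} = Set.univ.pi fun v => if v ∈ s then {a} else Set.univ := by
    ext ω
    simp only [Set.mem_ofPred_eq, Set.mem_univ_pi]
    exact forall_congr' fun v => by split_ifs with h <;> simp [h]
  rw [this, measureReal_def, Measure.pi_pi, ENNReal.toReal_prod]
  simp [apply_ite, prod_ite_mem, measureReal_def]

variable [MeasurableSingletonClass α] [Countable α]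

theorem measurableSet_comap_restrict_of_dependsOn (S : Finset V) {E : Set (V → α)}
    (hE : DependsOn (· ∈ E) (S : Set V)) :
    MeasurableSet[MeasurableSpace.comap (fun ω (v : S) => ω v) inferInstance] E := by
  refine ⟨(fun ω (v : S) => ω v) '' E, (Set.to_countable _).measurableSet, ?_⟩
  ext ω
  constructor
  · rintro ⟨ω', hω', heq⟩
    exact (hE fun v hv => congrFun heq ⟨v, hv⟩).mp hω'
  · exact fun h => ⟨ω, h, rfl⟩

theorem measureReal_pi_inter_eq_mul_of_dependsOn {S T : Finset V} (hST : Disjoint S T)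
    {E F : Set (V → α)} (hE : DependsOn (· ∈ E) (S : Set V)) (hF : DependsOn (· ∈ F) (T : Set V)) :
    (Measure.pi μ).real (E ∩ F) = (Measure.pi μ).real E * (Measure.pi μ).real F := by
  have hind := (iIndepFun_pi (μ := μ) (X := fun _ => id) fun _ => aemeasurable_id).indepFun_finset
    S T hST fun v => measurable_pi_apply v
  simp only [measureReal_def, hind.meas_inter (measurableSet_comap_restrict_of_dependsOn S hE)
    (measurableSet_comap_restrict_of_dependsOn T hF), ENNReal.toReal_mul]

theorem LovaszLocalLemma.exists_forall_notMem_of_dependsOn {ι : Type*} [Fintype ι] [DecidableEq ι]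
    [DecidableEq V] {A : ι → Set (V → α)} {S : ι → Finset V}
    (hA : ∀ i, DependsOn (· ∈ A i) (S i : Set V)) {D : ℕ}
    (hS : ∀ i, #{j | ¬Disjoint (S i) (S j)} ≤ D)
    (hμA : ∀ i, (Measure.pi μ).real (A i) * ((D : ℝ) + 2) ^ 2 ≤ 1) :
    ∃ ω, ∀ i, ω ∉ A i := by
  refine exists_forall_notMem (Γ := fun i => {j | ¬Disjoint (S i) (S j)})
    (fun i F _ hF => measureReal_pi_inter_eq_mul_of_dependsOn ?_ (hA i)
      (dependsOn_biInter_compl hA F)) hS hμA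
  refine (disjoint_biUnion_right _ _ _).2 fun j hj => ?_
  by_contra h
  exact disjoint_left.1 hF hj (mem_filter.2 ⟨mem_univ j, h⟩)

end ProductSpace

section BernoulliProduct

variable {V : Type*} [Fintype V] (p : I)

theorem measureReal_bernoulli_pi_forall_eq (s : Finset V) (b : Bool) :
    (Measure.pi fun _ : V => bernoulliMeasure true false p).real {ω | ∀ v ∈ s, ω v = b} =
      (if b then (p : ℝ) else 1 - p) ^ #s := by
  rw [measureReal_pi_forall_eq, prod_const]
  cases b <;> simp

theorem measureReal_bernoulli_pi_lt_card_filter_le [DecidableEq V] (s : Finset V) (t : ℕ) :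
    (Measure.pi fun _ : V => bernoulliMeasure true false p).real {ω | t < #{v ∈ s | ω v}} ≤
      (#s).choose (t + 1) * (p : ℝ) ^ (t + 1) := by
  have hsub : {ω : V → Bool | t < #{v ∈ s | ω v}} ⊆
      ⋃ T ∈ s.powersetCard (t + 1), {ω | ∀ v ∈ T, ω v = true} := by
    intro ω hω
    obtain ⟨T, hTs, hT⟩ := exists_subset_card_eq (Nat.succ_le_of_lt hω)
    exact Set.mem_biUnion (mem_powersetCard.2 ⟨hTs.trans (filter_subset _ _), hT⟩)
      fun v hv => (mem_filter.1 (hTs hv)).2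
  refine (measureReal_mono hsub (measure_ne_top _ _)).trans
    ((measureReal_biUnion_finset_le _ _).trans_eq ?_)
  rw [sum_congr rfl fun T hT => by
    rw [measureReal_bernoulli_pi_forall_eq, if_pos rfl, (mem_powersetCard.1 hT).2], sum_const,
    card_powersetCard, nsmul_eq_mul]

end BernoulliProduct

theorem exists_injective_prod_fin_of_card_le {α β : Type*} [Fintype α] [DecidableEq α]
    [DecidableEq β] (N : α → Finset β) {k n : ℕ} (hn : 0 < n) (hk : ∀ a, k * n ≤ #(N a))
    (hN : ∀ b, #{a | b ∈ N a} ≤ n) :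
    ∃ g : α × Fin k → β, Function.Injective g ∧ ∀ x, g x ∈ N x.1 := by
  refine (all_card_le_biUnion_card_iff_exists_injective fun x : α × Fin k => N x.1).1 fun s => ?_
  set U := s.biUnion fun x => N x.1
  set s' := s.image Prod.fst
  have hs : #s ≤ #s' * k := by
    calc #s ≤ #(s' ×ˢ (univ : Finset (Fin k))) :=
          card_le_card fun x hx => mem_product.2 ⟨mem_image_of_mem _ hx, mem_univ _⟩
      _ = #s' * k := by rw [card_product, card_univ, Fintype.card_fin]
  have hdouble : #s' * (k * n) ≤ #U * n := by
    refine card_mul_le_card_mul (fun a b => b ∈ N a) (fun a ha => ?_) fun b _ => ?_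
    · obtain ⟨x, hx, rfl⟩ := mem_image.1 ha
      refine (hk x.1).trans (card_le_card fun b hb => mem_filter.2 ⟨?_, hb⟩)
      exact mem_biUnion.2 ⟨x, hx, hb⟩
    · exact (card_le_card fun a ha => mem_filter.2 ⟨mem_univ a, (mem_filter.1 ha).2⟩).trans (hN b)
  have : #s' * k * n ≤ #U * n := by nlinarith
  exact hs.trans (Nat.le_of_mul_le_mul_right this hn)

namespace SimpleGraph

variable {V : Type*} [Fintype V] {G : SimpleGraph V} [DecidableRel G.Adj] {d : ℕ}

variable (G) in
/-- The events to avoid for the set of centers `{v | ω v}`: `(v, false)` says that `v` has no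
neighbouring center, `(v, true)` that it has more than `t`. -/
def badEvent (t : ℕ) : V × Bool → Set (V → Bool)
  | (v, false) => {ω | ∀ u ∈ G.neighborFinset v, ω u = false}
  | (v, true) => {ω | t < #{u ∈ G.neighborFinset v | ω u}}

theorem dependsOn_badEvent (t : ℕ) (i : V × Bool) :
    DependsOn (· ∈ G.badEvent t i) (G.neighborFinset i.1 : Set V) := by
  obtain ⟨v, _ | _⟩ := i <;> intro ω ω' h <;> simp only [badEvent, Set.mem_ofPred_eq]
  · exact propext (forall₂_congr fun u hu => by rw [h u hu])
  · rw [filter_congr fun u hu => by rw [h u hu]]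

variable [DecidableEq V]

theorem card_filter_not_disjoint_neighborFinset_le (hG : G.IsRegularOfDegree d) (v : V) :
    #{u | ¬Disjoint (G.neighborFinset v) (G.neighborFinset u)} ≤ d ^ 2 := by
  calc #{u | ¬Disjoint (G.neighborFinset v) (G.neighborFinset u)}
      ≤ #((G.neighborFinset v).biUnion fun w => G.neighborFinset w) := by
        refine card_le_card fun u hu => ?_
        obtain ⟨w, hwv, hwu⟩ := not_disjoint_iff.1 (mem_filter.1 hu).2
        refine mem_biUnion.2 ⟨w, hwv, (G.mem_neighborFinset _ _).2 ?_⟩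
        exact G.adj_symm ((G.mem_neighborFinset _ _).1 hwu)
    _ ≤ ∑ w ∈ G.neighborFinset v, #(G.neighborFinset w) := card_biUnion_le
    _ = d ^ 2 := by
      simp only [card_neighborFinset_eq_degree, hG.degree_eq, sum_const, smul_eq_mul, sq]

theorem card_filter_not_disjoint_neighborFinset_prod_le (hG : G.IsRegularOfDegree d)
    (i : V × Bool) :
    #{j : V × Bool | ¬Disjoint (G.neighborFinset i.1) (G.neighborFinset j.1)} ≤ 2 * d ^ 2 := by
  rw [← univ_product_univ,
    filter_product_left fun u => ¬Disjoint (G.neighborFinset i.1) (G.neighborFinset u),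
    card_product, card_univ, Fintype.card_bool, mul_comm]
  exact Nat.mul_le_mul_left 2 (card_filter_not_disjoint_neighborFinset_le hG i.1)

theorem exists_finset_forall_exists_adj_mem_and_card_inter_le (hG : G.IsRegularOfDegree d)
    (p : I) (t : ℕ)
    (hnone : (1 - (p : ℝ)) ^ d * (2 * d ^ 2 + 2) ^ 2 ≤ 1)
    (hmany : d.choose (t + 1) * (p : ℝ) ^ (t + 1) * (2 * d ^ 2 + 2) ^ 2 ≤ 1) :
    ∃ C : Finset V, (∀ v, ∃ u ∈ C, G.Adj v u) ∧ ∀ v, #(G.neighborFinset v ∩ C) ≤ t := by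
  have hμA : ∀ i, (Measure.pi fun _ : V => bernoulliMeasure true false p).real (G.badEvent t i) *
      (((2 * d ^ 2 : ℕ) : ℝ) + 2) ^ 2 ≤ 1 := by
    rintro ⟨v, _ | _⟩ <;> simp only [badEvent]
    · rw [measureReal_bernoulli_pi_forall_eq, if_neg Bool.false_ne_true,
        card_neighborFinset_eq_degree, hG.degree_eq]
      push_cast
      exact hnone
    · refine (mul_le_mul_of_nonneg_right (measureReal_bernoulli_pi_lt_card_filter_le p _ t)
        (by positivity)).trans ?_
      rw [card_neighborFinset_eq_degree, hG.degree_eq]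
      push_cast
      exact hmany
  obtain ⟨ω, hω⟩ := LovaszLocalLemma.exists_forall_notMem_of_dependsOn (dependsOn_badEvent t)
    (card_filter_not_disjoint_neighborFinset_prod_le hG) hμA
  refine ⟨({u | ω u} : Finset V), fun v => ?_, fun v => ?_⟩
  · obtain ⟨u, hu, hωu⟩ : ∃ u ∈ G.neighborFinset v, ω u = true := by
      simpa [badEvent] using hω (v, false)
    exact ⟨u, by simpa using hωu, (G.mem_neighborFinset _ _).1 hu⟩
  · simpa [badEvent, inter_filter] using hω (v, true)

theorem exists_starFactor_of_centers {C : Finset V} {k t : ℕ} (ht : 0 < t)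
    (hdom : ∀ v, ∃ u ∈ C, G.Adj v u) (hcap : ∀ v, #(G.neighborFinset v ∩ C) ≤ t)
    (hdeg : ∀ c ∈ C, (k + 1) * t ≤ G.degree c) :
    ∃ f : V → V, (∀ v, v ∉ C → f v ∈ C ∧ G.Adj v (f v)) ∧
      ∀ c ∈ C, k ≤ #{v | v ∉ C ∧ f v = c} := by
  have hleaves : ∀ c : C, k * t ≤ #(G.neighborFinset c \ C) := by
    intro c
    have := card_sdiff_add_card_inter (G.neighborFinset c) C
    rw [card_neighborFinset_eq_degree] at this
    nlinarith [hcap c, hdeg c c.2]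
  have hcenters : ∀ v, #{c : C | v ∈ G.neighborFinset c \ C} ≤ t := by
    intro v
    refine (card_le_card_of_injOn Subtype.val (fun c hc => ?_) Subtype.val_injective.injOn).trans
      (hcap v)
    obtain ⟨hvc, -⟩ := mem_sdiff.1 (mem_filter.1 hc).2
    exact mem_inter.2 ⟨(G.mem_neighborFinset _ _).2 ((G.mem_neighborFinset _ _).1 hvc).symm, c.2⟩
  obtain ⟨g, hg, hgN⟩ := exists_injective_prod_fin_of_card_le _ ht hleaves hcenters
  choose center hcenter hadj using hdom
  classical
  let f v := if h : ∃ x, g x = v then (h.choose.1 : V) else center v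
  have hfg : ∀ x, f (g x) = x.1 := fun x => by
    simp only [f, dif_pos (⟨x, rfl⟩ : ∃ y, g y = g x), hg (⟨x, rfl⟩ : ∃ y, g y = g x).choose_spec]
  refine ⟨f, fun v hv => ?_, fun c hc => ?_⟩
  · by_cases h : ∃ x, g x = v
    · obtain ⟨x, rfl⟩ := h
      obtain ⟨hadj, -⟩ := mem_sdiff.1 (hgN x)
      exact hfg x ▸ ⟨x.1.2, ((G.mem_neighborFinset _ _).1 hadj).symm⟩
    · simp only [f, dif_neg h]
      exact ⟨hcenter v, hadj v⟩
  · calc k = #(univ : Finset (Fin k)) := by simp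
      _ ≤ #{v | v ∉ C ∧ f v = c} := by
        refine card_le_card_of_injOn (fun i => g (⟨c, hc⟩, i)) (fun i _ => ?_)
          fun i _ j _ hij => (Prod.ext_iff.1 (hg hij)).2
        exact mem_filter.2 ⟨mem_univ _, (mem_sdiff.1 (hgN _)).2, hfg _⟩

end SimpleGraph

namespace StarFactor

theorem one_le_log {d : ℕ} (hd : 10 ^ 6 ≤ d) : 1 ≤ log d := by
  rw [le_log_iff_exp_le (by positivity)]
  have : (10 ^ 6 : ℝ) ≤ d := by exact_mod_cast hd
  linarith [exp_one_lt_d9]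

theorem five_mul_log_le {d : ℕ} (hd : 10 ^ 6 ≤ d) : 5 * log d ≤ d := by
  have hd' : (10 ^ 6 : ℝ) ≤ d := by exact_mod_cast hd
  nlinarith [log_sq_le_four_mul (by linarith : (1 : ℝ) ≤ d), one_le_log hd]

theorem mul_sq_le_one_of_le_exp {d : ℕ} (hd : 10 ^ 6 ≤ d) {q : ℝ} (hq : q ≤ exp (-(5 * log d))) :
    q * (2 * d ^ 2 + 2) ^ 2 ≤ 1 := by
  have hd' : (10 ^ 6 : ℝ) ≤ d := by exact_mod_cast hd
  rw [exp_neg, show (5 : ℝ) * log d = log ((d : ℝ) ^ 5) by rw [log_pow]; norm_num,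
    exp_log (by positivity)] at hq
  calc q * (2 * d ^ 2 + 2) ^ 2 ≤ ((d : ℝ) ^ 5)⁻¹ * (2 * d ^ 2 + 2) ^ 2 := by gcongr
    _ ≤ 1 := by
      rw [inv_mul_le_one₀ (by positivity)]
      nlinarith [pow_le_pow_left₀ (by norm_num) hd' 3]

theorem choose_ceil_mul_pow_le_exp {d : ℕ} (hd : 10 ^ 6 ≤ d) :
    d.choose (⌈40 * log d⌉₊ + 1) * (5 * log d / d) ^ (⌈40 * log d⌉₊ + 1) ≤ exp (-(5 * log d)) := by
  have hL := one_le_log hd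
  refine (Nat.choose_mul_pow_le_exp (by positivity) _ _).trans (exp_le_exp.2 ?_)
  rw [mul_div_cancel₀ _ (by positivity)]
  push_cast
  nlinarith [Nat.le_ceil (40 * log d), exp_one_lt_d9]

theorem ceil_add_one_mul_ceil_le {d : ℕ} (hd : 10 ^ 6 ≤ d) :
    (⌈d / (100 * log d)⌉₊ + 1) * ⌈40 * log d⌉₊ ≤ d := by
  have hd' : (10 ^ 6 : ℝ) ≤ d := by exact_mod_cast hd
  have hL := one_le_log hd
  have hk := Nat.ceil_lt_add_one (by positivity : 0 ≤ (d : ℝ) / (100 * log d))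
  have ht := Nat.ceil_lt_add_one (by positivity : 0 ≤ 40 * log d)
  have hkL : (d : ℝ) / (100 * log d) * log d = d / 100 := by field_simp
  have hlog : 82 * log d ≤ 59 / 100 * d := by
    nlinarith [log_sq_le_four_mul (by linarith : (1 : ℝ) ≤ d)]
  have : ((⌈d / (100 * log d)⌉₊ + 1 : ℕ) : ℝ) * ⌈40 * log d⌉₊ ≤ d := by
    calc ((⌈d / (100 * log d)⌉₊ + 1 : ℕ) : ℝ) * ⌈40 * log d⌉₊
        ≤ (d / (100 * log d) + 2) * (41 * log d) := by
          push_cast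
          exact mul_le_mul (by linarith) (by linarith) (by positivity) (by positivity)
      _ ≤ d := by nlinarith
  exact_mod_cast this

theorem exists_centers_of_isRegularOfDegree {V : Type*} [Fintype V] [DecidableEq V]
    {G : SimpleGraph V} [DecidableRel G.Adj] {d : ℕ} (hd : 10 ^ 6 ≤ d)
    (hG : G.IsRegularOfDegree d) :
    ∃ C : Finset V, (∀ v, ∃ u ∈ C, G.Adj v u) ∧
      ∀ v, #(G.neighborFinset v ∩ C) ≤ ⌈40 * log d⌉₊ :=
  G.exists_finset_forall_exists_adj_mem_and_card_inter_le hG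
    ⟨5 * log d / d, by positivity, (div_le_one (by positivity)).2 (five_mul_log_le hd)⟩ _
    (mul_sq_le_one_of_le_exp hd (one_sub_div_pow_le_exp_neg (five_mul_log_le hd)))
    (mul_sq_le_one_of_le_exp hd (choose_ceil_mul_pow_le_exp hd))

end StarFactor

/-- There is an absolute constant `c > 0` such that for all sufficiently large `d`,
every finite simple `d`-regular graph contains a star factor in which every star
has at least `c * d / log d` edges.  A star factor is encoded by the set `C` of
centers and an assignment `f` of each leaf to an adjacent center; the number of
edges of the star centered at `c'` is the number of leaves assigned to `c'`. -/
theorem star_factor_regular : ∃ c : ℝ, 0 < c ∧ ∃ d₀ : ℕ, ∀ d : ℕ, d₀ ≤ d →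
    ∀ (V : Type) [Fintype V] [DecidableEq V] (G : SimpleGraph V) [DecidableRel G.Adj],
      G.IsRegularOfDegree d →
      ∃ (C : Finset V) (f : V → V),
        (∀ v : V, v ∉ C → f v ∈ C ∧ G.Adj v (f v)) ∧
        (∀ c' ∈ C,
          c * d / Real.log d ≤ ((Finset.univ.filter (fun v => v ∉ C ∧ f v = c')).card : ℝ)) := by
  refine ⟨1 / 100, by norm_num, 10 ^ 6, fun d hd V _ _ G _ hG => ?_⟩
  have hL := StarFactor.one_le_log hd
  obtain ⟨C, hdom, hcap⟩ := StarFactor.exists_centers_of_isRegularOfDegree hd hG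
  obtain ⟨f, hf, hleaves⟩ := G.exists_starFactor_of_centers (Nat.ceil_pos.2 (by positivity)) hdom
    hcap fun c _ => (hG.degree_eq c).ge.trans' (StarFactor.ceil_add_one_mul_ceil_le hd)
  refine ⟨C, f, hf, fun c hc => ?_⟩
  calc 1 / 100 * (d : ℝ) / log d = d / (100 * log d) := by ring
    _ ≤ ⌈d / (100 * log d)⌉₊ := Nat.le_ceil _
    _ ≤ _ := by exact_mod_cast hleaves c hc
end

section
/- Let G be a d-regular graph with d ≥ 2, let p = (2 + 2·log d)/d, and choose a random set C by including each vertex independently with probability p. Then for each vertex v, the probability that v has no neighbor in C or more than 3pd neighbors in C is less than 1/(e·d²), for all sufficiently large d. -/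
/-!
Let `N` be the neighbourhood of `v`, so `#N = d`, and `p d = s := 2 + 2 log d`. Under the product
Bernoulli measure the probability that `C ∩ N = A` is `p^#A (1-p)^(d-#A)`, so both bad events are
binomial sums. The empty one is `(1 - p)^d ≤ e^{-s}`. For the upper tail, weighting each term by
`3^(#A - 3s) ≥ 1` and summing over all of `N.powerset` gives `3^{-3s} (1 + 2p)^d ≤ (e²/27)^s < e^{-s}`.
Hence the probability is below `2 e^{-s} = 2 e^{-2} / d² < 1 / (e d²)`, using `2 < e`.
-/

set_option linter.deprecated false

open MeasureTheory Finset Real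
open scoped NNReal

section BernoulliPi

variable {V : Type*} [Fintype V] (p : ℝ≥0) (hp : p ≤ 1)

noncomputable abbrev bernoulliPi : Measure (V → Bool) :=
  Measure.pi fun _ => (PMF.bernoulli p hp).toMeasure

theorem measureReal_bernoulliPi_filter_eq {N A : Finset V} (hA : A ⊆ N) :
    (bernoulliPi p hp).real {ω | N.filter (fun u => ω u = true) = A}
      = (p : ℝ) ^ #A * (1 - (p : ℝ)) ^ (#N - #A) := by
  classical
  have hcyl : {ω : V → Bool | N.filter (fun u => ω u = true) = A}
      = Set.univ.pi fun u => if u ∈ N then {decide (u ∈ A)} else Set.univ := by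
    ext ω
    simp only [Set.mem_ofPred_eq, Set.mem_univ_pi]
    constructor
    · rintro rfl u
      split_ifs with hu <;> simp [hu]
    · intro h
      ext u
      have hu' := h u
      by_cases hu : u ∈ N
      · simp only [hu, if_true, Set.mem_singleton_iff] at hu'
        simp [hu, hu']
      · simpa [hu] using fun h => hu (hA h)
  have hfactor : ∀ u, (PMF.bernoulli p hp).toMeasure
      (if u ∈ N then {decide (u ∈ A)} else Set.univ)
        = if u ∈ N then (if u ∈ A then (p : ENNReal) else 1 - p) else 1 := by
    intro u
    by_cases hN : u ∈ N
    · by_cases huA : u ∈ A <;> simp [hN, huA, PMF.bernoulli_apply]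
    · simp only [hN, if_false, measure_univ]
  rw [hcyl, measureReal_def, Measure.pi_pi]
  simp only [hfactor, Finset.prod_ite_mem, univ_inter, prod_ite, filter_mem_eq_inter, prod_const]
  rw [inter_eq_right.mpr hA, filter_notMem_eq_sdiff, card_sdiff_of_subset hA]
  simp [ENNReal.toReal_sub_of_le (ENNReal.coe_le_one_iff.mpr hp) ENNReal.one_ne_top]

theorem measureReal_bernoulliPi_setOf_filter (N : Finset V) (P : Finset V → Prop)
    [DecidablePred P] :
    (bernoulliPi p hp).real {ω | P (N.filter fun u => ω u = true)}
      = ∑ A ∈ N.powerset.filter P, (p : ℝ) ^ #A * (1 - (p : ℝ)) ^ (#N - #A) := by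
  have hpre : {ω : V → Bool | P (N.filter fun u => ω u = true)}
      = (fun ω => N.filter fun u => ω u = true) ⁻¹' ↑(N.powerset.filter P) := by
    ext ω
    simp [filter_subset]
  rw [hpre, ← sum_measureReal_preimage_singleton _ fun _ _ => .of_discrete]
  refine sum_congr rfl fun A hA => ?_
  exact measureReal_bernoulliPi_filter_eq p hp (mem_powerset.mp (mem_filter.mp hA).1)

end BernoulliPi

theorem sum_powerset_filter_lt_card_le {ι : Type*} (N : Finset ι) {a b m t : ℝ}
    (ha : 0 ≤ a) (hb : 0 ≤ b) (ht : 0 ≤ t) :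
    ∑ A ∈ N.powerset.filter (fun A => m < #A), a ^ #A * b ^ (#N - #A)
      ≤ exp (-(t * m)) * (exp t * a + b) ^ #N := by
  have hterm : ∀ A ∈ N.powerset.filter (fun A => m < #A),
      a ^ #A * b ^ (#N - #A) ≤ exp (-(t * m)) * ((exp t * a) ^ #A * b ^ (#N - #A)) := by
    intro A hA
    have hm : m < #A := (mem_filter.mp hA).2
    have hexp : 1 ≤ exp (-(t * m)) * exp t ^ #A := by
      rw [← exp_nat_mul, ← exp_add, one_le_exp_iff]
      nlinarith
    calc a ^ #A * b ^ (#N - #A) = 1 * (a ^ #A * b ^ (#N - #A)) := (one_mul _).symm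
      _ ≤ exp (-(t * m)) * exp t ^ #A * (a ^ #A * b ^ (#N - #A)) := by gcongr
      _ = _ := by ring
  calc _ ≤ ∑ A ∈ N.powerset.filter (fun A => m < #A),
        exp (-(t * m)) * ((exp t * a) ^ #A * b ^ (#N - #A)) := sum_le_sum hterm
    _ ≤ ∑ A ∈ N.powerset, exp (-(t * m)) * ((exp t * a) ^ #A * b ^ (#N - #A)) :=
        sum_le_sum_of_subset_of_nonneg (filter_subset _ _) fun _ _ _ => by positivity
    _ = _ := by rw [← mul_sum, sum_pow_mul_eq_add_pow]

theorem sum_powerset_filter_three_mul_lt_card_le {ι : Type*} (N : Finset ι) {a m : ℝ}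
    (ha₀ : 0 ≤ a) (ha₁ : a ≤ 1) (hm : a * #N = m) :
    ∑ A ∈ N.powerset.filter (fun A => 3 * m < #A), a ^ #A * (1 - a) ^ (#N - #A)
      ≤ exp (-((3 * log 3 - 2) * m)) := by
  have hmgf : (exp (log 3) * a + (1 - a)) ^ #N ≤ exp (2 * m) := by
    rw [exp_log three_pos, ← hm, show 2 * (a * #N) = #N * (2 * a) by ring, exp_nat_mul]
    gcongr
    linarith [add_one_le_exp (2 * a)]
  calc _ ≤ exp (-(log 3 * (3 * m))) * (exp (log 3) * a + (1 - a)) ^ #N :=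
        sum_powerset_filter_lt_card_le N ha₀ (by linarith) (log_nonneg (by norm_num))
    _ ≤ exp (-(log 3 * (3 * m))) * exp (2 * m) := by gcongr
    _ = _ := by rw [← exp_add]; ring_nf

theorem exp_neg_add_exp_lt {d : ℝ} (hd : 1 ≤ d) :
    exp (-(2 + 2 * log d)) + exp (-((3 * log 3 - 2) * (2 + 2 * log d)))
      < 1 / (exp 1 * d ^ 2) := by
  have hd0 : 0 < d := by linarith
  have hs : 0 < 2 + 2 * log d := by linarith [log_nonneg hd]
  have hlt : exp (-((3 * log 3 - 2) * (2 + 2 * log d))) < exp (-(2 + 2 * log d)) := by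
    rw [exp_lt_exp]
    nlinarith [(lt_log_iff_exp_lt three_pos).mpr exp_one_lt_three]
  have hval : exp (-(2 + 2 * log d)) = exp (-2) / d ^ 2 := by
    have hsq : exp (2 * log d) = d ^ 2 := by rw [two_mul, exp_add, exp_log hd0, sq]
    rw [neg_add, exp_add, exp_neg (2 * log d), hsq, div_eq_mul_inv]
  have htwo : 2 * exp (-2) < exp (-1) := by
    rw [show (-1 : ℝ) = 1 + -2 by norm_num, exp_add]
    nlinarith [exp_one_gt_two, exp_pos (-2)]
  calc _ < 2 * exp (-(2 + 2 * log d)) := by linarith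
    _ = 2 * exp (-2) / d ^ 2 := by rw [hval]; ring
    _ < exp (-1) / d ^ 2 := by gcongr
    _ = 1 / (exp 1 * d ^ 2) := by rw [exp_neg]; field_simp

/-- For a `d`-regular graph, choosing each vertex independently with probability
`p = (2 + 2 log d)/d` to lie in a random set `C`, for every vertex `v` the
probability that `v` has no neighbor in `C` or more than `3pd = 3(2 + 2 log d)`
neighbors in `C` is less than `1/(e d²)`, for all sufficiently large `d`.
The random set is modeled by a Bernoulli product measure on `V → Bool`. -/
theorem bad_event_probability : ∃ d₀ : ℕ, ∀ d : ℕ, d₀ ≤ d →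
    ∀ (hp : ENNReal.ofReal ((2 + 2 * Real.log d) / d) ≤ 1),
    ∀ (V : Type) [Fintype V] [DecidableEq V] (G : SimpleGraph V) [DecidableRel G.Adj],
      G.IsRegularOfDegree d →
      ∀ v : V,
        (MeasureTheory.Measure.pi (fun _ : V =>
            (PMF.bernoulli (Real.toNNReal ((2 + 2 * Real.log d) / d))
              (Real.toNNReal_le_one.mpr (ENNReal.ofReal_le_one.mp hp))).toMeasure))
          {ω : V → Bool |
            ((G.neighborFinset v).filter (fun u => ω u = true)).card = 0 ∨
            3 * (2 + 2 * Real.log d)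
              < (((G.neighborFinset v).filter (fun u => ω u = true)).card : ℝ)}
          < ENNReal.ofReal (1 / (Real.exp 1 * (d : ℝ) ^ 2)) := by
  refine ⟨1, fun d hd hp V _ _ G _ hreg v => ?_⟩
  have hd₀ : (0 : ℝ) < d := by exact_mod_cast hd
  have hp₀ : 0 ≤ (2 + 2 * log d) / d := by
    have := log_natCast_nonneg d
    positivity
  have hp₁ : (2 + 2 * log d) / d ≤ 1 := ENNReal.ofReal_le_one.mp hp
  have hN : #(G.neighborFinset v) = d := (G.card_neighborFinset_eq_degree v).trans (hreg v)
  rw [← ofReal_measureReal, ENNReal.ofReal_lt_ofReal_iff (by positivity), Set.setOf_or]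
  refine (measureReal_union_le _ _).trans_lt ?_
  rw [measureReal_bernoulliPi_setOf_filter _ _ _ (#· = 0),
    measureReal_bernoulliPi_setOf_filter _ _ _ fun A => 3 * (2 + 2 * log d) < (#A : ℝ),
    ← powersetCard_eq_filter, powersetCard_zero, sum_singleton, Real.coe_toNNReal _ hp₀]
  calc _ ≤ exp (-(2 + 2 * log d)) + exp (-((3 * log 3 - 2) * (2 + 2 * log d))) := by
        gcongr
        · simpa [hN] using one_sub_div_pow_le_exp_neg ((div_le_one hd₀).mp hp₁)
        · exact sum_powerset_filter_three_mul_lt_card_le _ hp₀ hp₁ (by rw [hN]; field_simp)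
    _ < _ := exp_neg_add_exp_lt (by exact_mod_cast hd)
end

section
/- Let B be a finite bipartite graph with parts X = X₁ ∪ X₂ and Y = Y₁ ∪ Y₂ (disjoint unions). Suppose: every vertex of X₁ has degree at least d₁ in B and all its neighbors lie in Y₁; every vertex of Y₁ has at most D₁ neighbors in X₁ and at most D₂ neighbors in X₂; every vertex of X₂ has degree at least d₂; and every vertex of Y₂ has at most D₂ neighbors, all of which are in X₂. If k is a positive integer with k ≤ d₁/(2·D₁) and k ≤ d₂/(2·(D₁ + D₂)) — more simply, if d₁/(2D₁) ≥ k and d₂/(4·max(D₁,D₂)) ≥ k — then for every S ⊆ X, |N_B(S)| ≥ k|S|. -/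
/-!
Split `S` into `S ∩ X₁` and `S ∩ X₂`; one of them has at least `|S|/2` elements. Double count
the edges between that part and its neighbourhood: each of its vertices has degree at least
`dᵢ`, while each neighbour absorbs at most `D₁` edges from `X₁`, resp. at most
`D₂ ≤ D₁ + D₂` edges from `X₂`. Hence the neighbourhood has at least `|S| dᵢ / (2 Dᵢ) ≥ k |S|`
elements.
-/

open Finset

namespace SimpleGraph

variable {V : Type*} [Fintype V] [DecidableEq V] (G : SimpleGraph V) [DecidableRel G.Adj]

theorem card_mul_le_card_mul_of_neighborFinset_subset {A T : Finset V} {d D : ℕ}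
    (hdeg : ∀ v ∈ A, d ≤ G.degree v) (hsub : ∀ v ∈ A, G.neighborFinset v ⊆ T)
    (hcodeg : ∀ y ∈ T, #(G.neighborFinset y ∩ A) ≤ D) : #A * d ≤ #T * D := by
  refine card_mul_le_card_mul G.Adj (fun v hv => ?_) (fun y hy => ?_)
  · have hv' : T.bipartiteAbove G.Adj v = G.neighborFinset v := by
      ext y
      simpa [bipartiteAbove] using fun hy => hsub v hv ((mem_neighborFinset G v y).2 hy)
    rw [hv', card_neighborFinset_eq_degree]
    exact hdeg v hv
  · have hy' : A.bipartiteBelow G.Adj y = G.neighborFinset y ∩ A := by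
      ext; simp [bipartiteBelow, adj_comm, and_comm]
    exact hy' ▸ hcodeg y hy

theorem biUnion_neighborFinset_subset_of_bipartite {X Y S : Finset V} (hXY : Disjoint X Y)
    (hbip : ∀ u v, G.Adj u v → (u ∈ X ∧ v ∈ Y) ∨ (u ∈ Y ∧ v ∈ X)) (hS : S ⊆ X) :
    S.biUnion (fun v => G.neighborFinset v) ⊆ Y := by
  simp only [biUnion_subset]
  intro u hu v huv
  refine ((hbip u v ((G.mem_neighborFinset u v).1 huv)).resolve_right fun h => ?_).2
  exact Finset.disjoint_left.1 hXY (hS hu) h.1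

end SimpleGraph

theorem Finset.card_le_two_mul_card_inter_or {α : Type*} [DecidableEq α] {S X₁ X₂ : Finset α}
    (hS : S ⊆ X₁ ∪ X₂) : #S ≤ 2 * #(S ∩ X₁) ∨ #S ≤ 2 * #(S ∩ X₂) := by
  have hsplit : #S ≤ #(S ∩ X₁) + #(S ∩ X₂) := by
    refine (card_le_card ?_).trans (card_union_le _ _)
    rw [← inter_union_distrib_left]
    exact subset_inter subset_rfl hS
  omega

theorem Nat.mul_le_of_le_div_two_mul_of_mul_le {k s a t d D : ℕ}
    (hk : (k : ℝ) ≤ d / (2 * D)) (hcount : a * d ≤ t * D) (hs : s ≤ 2 * a) : k * s ≤ t := by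
  rcases D.eq_zero_or_pos with rfl | hD
  · -- `d / 0 = 0` in `ℝ`, so `hk` forces `k = 0`.
    obtain rfl : k = 0 := by exact_mod_cast le_antisymm (by simpa using hk) k.cast_nonneg
    simp
  · have hD' : (0 : ℝ) < D := by exact_mod_cast hD
    have hcount' : (a : ℝ) * d ≤ t * D := by exact_mod_cast hcount
    have hs' : (s : ℝ) ≤ 2 * a := by exact_mod_cast hs
    suffices (k : ℝ) * s ≤ t by exact_mod_cast this
    calc (k : ℝ) * s ≤ d / (2 * D) * (2 * a) := by gcongr
      _ = a * d / D := by field_simp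
      _ ≤ t := by rwa [div_le_iff₀ hD']

theorem hall_condition_from_degrees_general {V : Type} [Fintype V] [DecidableEq V]
    (B : SimpleGraph V) [DecidableRel B.Adj]
    (X₁ X₂ Y₁ Y₂ : Finset V) (d₁ d₂ D₁ D₂ k : ℕ)
    (hdisjXY : Disjoint (X₁ ∪ X₂) (Y₁ ∪ Y₂))
    (hbip : ∀ u v : V, B.Adj u v →
      (u ∈ X₁ ∪ X₂ ∧ v ∈ Y₁ ∪ Y₂) ∨ (u ∈ Y₁ ∪ Y₂ ∧ v ∈ X₁ ∪ X₂))
    (hX₁ : ∀ v ∈ X₁, d₁ ≤ B.degree v ∧ B.neighborFinset v ⊆ Y₁)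
    (hY₁ : ∀ y ∈ Y₁, (B.neighborFinset y ∩ X₁).card ≤ D₁ ∧
                     (B.neighborFinset y ∩ X₂).card ≤ D₂)
    (hX₂ : ∀ v ∈ X₂, d₂ ≤ B.degree v)
    (hY₂ : ∀ y ∈ Y₂, B.neighborFinset y ⊆ X₂ ∧ (B.neighborFinset y).card ≤ D₂)
    (hk₁ : (k : ℝ) ≤ (d₁ : ℝ) / (2 * D₁))
    (hk₂ : (k : ℝ) ≤ (d₂ : ℝ) / (2 * ((D₁ : ℝ) + D₂))) :
    ∀ S ⊆ X₁ ∪ X₂, k * S.card ≤ (S.biUnion (fun v => B.neighborFinset v)).card := by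
  intro S hS
  set N := S.biUnion (fun v => B.neighborFinset v)
  have hSN : ∀ v ∈ S, B.neighborFinset v ⊆ N := fun v hv =>
    subset_biUnion_of_mem (fun v => B.neighborFinset v) hv
  have hNY : N ⊆ Y₁ ∪ Y₂ := B.biUnion_neighborFinset_subset_of_bipartite hdisjXY hbip hS
  rcases card_le_two_mul_card_inter_or hS with hS₁ | hS₂
  · refine (Nat.mul_le_of_le_div_two_mul_of_mul_le hk₁ ?_ hS₁).trans
      (card_le_card (inter_subset_left (s₂ := Y₁)))
    refine B.card_mul_le_card_mul_of_neighborFinset_subset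
      (fun v hv => (hX₁ v (mem_inter.1 hv).2).1)
      (fun v hv => subset_inter (hSN v (mem_inter.1 hv).1) (hX₁ v (mem_inter.1 hv).2).2)
      (fun y hy => ?_)
    exact (card_le_card (inter_subset_inter_left inter_subset_right)).trans
      (hY₁ y (mem_inter.1 hy).2).1
  · refine Nat.mul_le_of_le_div_two_mul_of_mul_le (D := D₁ + D₂) (by exact_mod_cast hk₂) ?_ hS₂
    refine B.card_mul_le_card_mul_of_neighborFinset_subset
      (fun v hv => hX₂ v (mem_inter.1 hv).2) (fun v hv => hSN v (mem_inter.1 hv).1)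
      (fun y hy => ?_)
    have hD₂ : #(B.neighborFinset y ∩ X₂) ≤ D₂ := by
      rcases mem_union.1 (hNY hy) with hy | hy
      · exact (hY₁ y hy).2
      · exact (card_le_card inter_subset_left).trans (hY₂ y hy).2
    exact (card_le_card (inter_subset_inter_left inter_subset_right)).trans
      (hD₂.trans le_add_self)

/-- Hall-condition derivation (Corollary 3.4 of the paper): a bipartite graph with
prospective centers `X = X₁ ∪ X₂` and prospective leaves `Y = Y₁ ∪ Y₂`, degree
lower bounds `d₁, d₂` on the two classes of centers and degree upper bounds
`D₁, D₂` on the leaves, satisfies the Hall condition with expansion factor `k`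
whenever `k ≤ d₁/(2 D₁)` and `k ≤ d₂/(2 (D₁ + D₂))`. -/
theorem hall_condition_from_degrees {V : Type} [Fintype V] [DecidableEq V]
    (B : SimpleGraph V) [DecidableRel B.Adj]
    (X₁ X₂ Y₁ Y₂ : Finset V) (d₁ d₂ D₁ D₂ k : ℕ)
    (hdisjX : Disjoint X₁ X₂) (hdisjY : Disjoint Y₁ Y₂)
    (hdisjXY : Disjoint (X₁ ∪ X₂) (Y₁ ∪ Y₂))
    (hbip : ∀ u v : V, B.Adj u v →
      (u ∈ X₁ ∪ X₂ ∧ v ∈ Y₁ ∪ Y₂) ∨ (u ∈ Y₁ ∪ Y₂ ∧ v ∈ X₁ ∪ X₂))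
    (hD₁pos : 0 < D₁) (hD₂pos : 0 < D₂) (hk : 0 < k)
    (hX₁ : ∀ v ∈ X₁, d₁ ≤ B.degree v ∧ B.neighborFinset v ⊆ Y₁)
    (hY₁ : ∀ y ∈ Y₁, (B.neighborFinset y ∩ X₁).card ≤ D₁ ∧
                     (B.neighborFinset y ∩ X₂).card ≤ D₂)
    (hX₂ : ∀ v ∈ X₂, d₂ ≤ B.degree v)
    (hY₂ : ∀ y ∈ Y₂, B.neighborFinset y ⊆ X₂ ∧ (B.neighborFinset y).card ≤ D₂)
    (hk₁ : (k : ℝ) ≤ (d₁ : ℝ) / (2 * D₁))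
    (hk₂ : (k : ℝ) ≤ (d₂ : ℝ) / (2 * ((D₁ : ℝ) + D₂))) :
    ∀ S ⊆ X₁ ∪ X₂, k * S.card ≤ (S.biUnion (fun v => B.neighborFinset v)).card :=
  hall_condition_from_degrees_general B X₁ X₂ Y₁ Y₂ d₁ d₂ D₁ D₂ k hdisjXY hbip hX₁ hY₁ hX₂ hY₂ hk₁
    hk₂
end

section
/- Symmetric Lovász Local Lemma: Let A₁,…,Aₙ be events in a probability space such that each P(Aᵢ) ≤ p and each Aᵢ is mutually independent of all but at most D of the other events. If e·p·(D+1) ≤ 1, then P(⋂ complement of Aᵢ) > 0. -/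
/-!
Let `B S` be the event that no `A j` with `j ∈ S` occurs. By strong induction on `S` one shows
`P(A i ∩ B S) ≤ x i * P(B S)` for `i ∉ S`: the events of `S` outside the neighbourhood `Γ i` are
independent of `A i`, and by induction adding each of the remaining (neighbouring) events to
them costs at most a factor `1 - x j`, which is exactly what the weight `∏ j ∈ Γ i, (1 - x j)`
in the hypothesis pays for. Chaining the same bound over all events gives
`P(B univ) ≥ ∏ i, (1 - x i) > 0`. The symmetric case takes `x i = 1 / (D + 2)`, and the
condition `e p (D + 1) ≤ 1` amounts to `(1 + 1 / (D + 1)) ^ (D + 1) ≤ e`.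
-/

open MeasureTheory Finset Real

lemma inv_exp_mul_le (D : ℕ) :
    (exp 1 * (D + 1))⁻¹ ≤ (D + 2 : ℝ)⁻¹ * (1 - (D + 2 : ℝ)⁻¹) ^ D := by
  have hrhs : (D + 2 : ℝ)⁻¹ * (1 - (D + 2 : ℝ)⁻¹) ^ D
      = ((1 + ((D + 1 : ℕ) : ℝ)⁻¹) ^ (D + 1) * (D + 1))⁻¹ := by
    have hD : (D + 2 : ℝ) = (1 + ((D + 1 : ℕ) : ℝ)⁻¹) * (D + 1) := by push_cast; field_simp; ring
    have h1 : 1 - (D + 2 : ℝ)⁻¹ = (1 + ((D + 1 : ℕ) : ℝ)⁻¹)⁻¹ := by push_cast; field_simp; ring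
    rw [h1, hD, inv_pow, pow_succ]
    field_simp
  rw [hrhs]
  gcongr
  exact one_add_inv_pow_le_exp

section

variable {Ω ι : Type*} [MeasurableSpace Ω] {μ : Measure Ω} [IsFiniteMeasure μ] [DecidableEq ι]
  {A : ι → Set Ω}

lemma measureReal_biInter_compl_insert {j : ι} (hA : MeasurableSet (A j)) (S : Finset ι) :
    μ.real (⋂ k ∈ insert j S, (A k)ᶜ)
      = μ.real (⋂ k ∈ S, (A k)ᶜ) - μ.real (A j ∩ ⋂ k ∈ S, (A k)ᶜ) := by
  rw [set_biInter_insert, Set.inter_comm (A j), ← Set.sdiff_eq_compl_inter,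
    ← measureReal_inter_add_sdiff (s := ⋂ k ∈ S, (A k)ᶜ) hA]
  ring

lemma one_sub_mul_le_measureReal_biInter_compl_insert {j : ι} {S : Finset ι} {c : ℝ}
    (hA : MeasurableSet (A j))
    (h : μ.real (A j ∩ ⋂ k ∈ S, (A k)ᶜ) ≤ c * μ.real (⋂ k ∈ S, (A k)ᶜ)) :
    (1 - c) * μ.real (⋂ k ∈ S, (A k)ᶜ) ≤ μ.real (⋂ k ∈ insert j S, (A k)ᶜ) := by
  rw [measureReal_biInter_compl_insert hA]
  linarith

lemma prod_one_sub_mul_le_measureReal_biInter_compl_union {x : ι → ℝ}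
    (hA : ∀ i, MeasurableSet (A i)) (hx : ∀ i, x i ≤ 1) (T U : Finset ι) :
    (∀ j ∈ U, ∀ V ⊆ U, j ∉ V →
        μ.real (A j ∩ ⋂ k ∈ V ∪ T, (A k)ᶜ) ≤ x j * μ.real (⋂ k ∈ V ∪ T, (A k)ᶜ)) →
      (∏ j ∈ U, (1 - x j)) * μ.real (⋂ k ∈ T, (A k)ᶜ) ≤ μ.real (⋂ k ∈ U ∪ T, (A k)ᶜ) := by
  induction U using Finset.induction_on with
  | empty => simp
  | @insert j U hj ih =>
    intro hbound
    have hU : (∏ k ∈ U, (1 - x k)) * μ.real (⋂ k ∈ T, (A k)ᶜ) ≤ μ.real (⋂ k ∈ U ∪ T, (A k)ᶜ) :=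
      ih fun k hk V hV hkV ↦ hbound k (mem_insert_of_mem hk) V (hV.trans (subset_insert j U)) hkV
    rw [prod_insert hj, insert_union, mul_assoc]
    calc (1 - x j) * ((∏ k ∈ U, (1 - x k)) * μ.real (⋂ k ∈ T, (A k)ᶜ))
        ≤ (1 - x j) * μ.real (⋂ k ∈ U ∪ T, (A k)ᶜ) :=
          mul_le_mul_of_nonneg_left hU (by linarith [hx j])
      _ ≤ μ.real (⋂ k ∈ insert j (U ∪ T), (A k)ᶜ) :=
        one_sub_mul_le_measureReal_biInter_compl_insert (hA j)
          (hbound j (mem_insert_self j U) U (subset_insert j U) hj)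

lemma measureReal_inter_biInter_compl_le {x : ι → ℝ} {Γ : ι → Finset ι}
    (hA : ∀ i, MeasurableSet (A i)) (hx0 : ∀ i, 0 ≤ x i) (hx1 : ∀ i, x i ≤ 1)
    (hprob : ∀ i, μ.real (A i) ≤ x i * ∏ j ∈ Γ i, (1 - x j))
    (hindep : ∀ i, ∀ J : Finset ι, (∀ j ∈ J, j ≠ i ∧ j ∉ Γ i) →
      μ (A i ∩ ⋂ j ∈ J, (A j)ᶜ) = μ (A i) * μ (⋂ j ∈ J, (A j)ᶜ))
    (S : Finset ι) :
    ∀ i ∉ S, μ.real (A i ∩ ⋂ j ∈ S, (A j)ᶜ) ≤ x i * μ.real (⋂ j ∈ S, (A j)ᶜ) := by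
  induction S using Finset.strongInduction with
  | H S ih =>
  intro i hi
  set S₁ := S.filter (· ∈ Γ i)
  set S₂ := S.filter (· ∉ Γ i)
  have hS : S₁ ∪ S₂ = S := filter_union_filter_not_eq _ S
  have hS₂ : μ.real (A i ∩ ⋂ j ∈ S₂, (A j)ᶜ) = μ.real (A i) * μ.real (⋂ j ∈ S₂, (A j)ᶜ) := by
    rw [measureReal_def, hindep i S₂, ENNReal.toReal_mul, measureReal_def, measureReal_def]
    intro j hj
    obtain ⟨hjS, hjΓ⟩ := mem_filter.mp hj
    exact ⟨fun h ↦ hi (h ▸ hjS), hjΓ⟩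
  have hneighbours : (∏ j ∈ S₁, (1 - x j)) * μ.real (⋂ j ∈ S₂, (A j)ᶜ)
      ≤ μ.real (⋂ j ∈ S, (A j)ᶜ) := by
    -- each `V ∪ S₂` below misses `j ∈ S`, so the induction hypothesis applies to it
    rw [← hS]
    refine prod_one_sub_mul_le_measureReal_biInter_compl_union hA hx1 S₂ S₁ ?_
    intro j hj V hV hjV
    have hjΓ : j ∈ Γ i := (mem_filter.mp hj).2
    have hjS₂ : j ∉ S₂ := fun h ↦ (mem_filter.mp h).2 hjΓ
    refine ih (V ∪ S₂) ?_ j (by simp [hjV, hjS₂])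
    refine (ssubset_iff_of_subset (hS ▸ union_subset_union hV le_rfl)).2 ⟨j, ?_, ?_⟩
    · exact filter_subset _ S hj
    · simp [hjV, hjS₂]
  have hprod : ∏ j ∈ Γ i, (1 - x j) ≤ ∏ j ∈ S₁, (1 - x j) :=
    prod_le_prod_of_subset_of_le_one (fun j hj ↦ (mem_filter.mp hj).2)
      (fun j _ ↦ by linarith [hx1 j]) (fun j _ _ ↦ by linarith [hx0 j])
  calc μ.real (A i ∩ ⋂ j ∈ S, (A j)ᶜ)
      ≤ μ.real (A i ∩ ⋂ j ∈ S₂, (A j)ᶜ) := by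
        refine measureReal_mono (Set.inter_subset_inter_right _ ?_)
        exact Set.biInter_subset_biInter_left (filter_subset _ S)
    _ ≤ x i * (∏ j ∈ S₁, (1 - x j)) * μ.real (⋂ j ∈ S₂, (A j)ᶜ) := by
        rw [hS₂]
        gcongr
        exact (hprob i).trans (mul_le_mul_of_nonneg_left hprod (hx0 i))
    _ ≤ x i * μ.real (⋂ j ∈ S, (A j)ᶜ) := by
        rw [mul_assoc]
        exact mul_le_mul_of_nonneg_left hneighbours (hx0 i)

end

theorem lovasz_local_lemma_asymmetric {Ω ι : Type*} [MeasurableSpace Ω] (μ : Measure Ω)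
    [IsProbabilityMeasure μ] [Fintype ι] [DecidableEq ι] (A : ι → Set Ω)
    (hA : ∀ i, MeasurableSet (A i)) (x : ι → ℝ) (hx0 : ∀ i, 0 ≤ x i) (hx1 : ∀ i, x i < 1)
    (Γ : ι → Finset ι) (hprob : ∀ i, μ.real (A i) ≤ x i * ∏ j ∈ Γ i, (1 - x j))
    (hindep : ∀ i, ∀ J : Finset ι, (∀ j ∈ J, j ≠ i ∧ j ∉ Γ i) →
      μ (A i ∩ ⋂ j ∈ J, (A j)ᶜ) = μ (A i) * μ (⋂ j ∈ J, (A j)ᶜ)) :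
    0 < μ (⋂ i, (A i)ᶜ) := by
  have hx1' : ∀ i, x i ≤ 1 := fun i ↦ (hx1 i).le
  have hchain := prod_one_sub_mul_le_measureReal_biInter_compl_union (μ := μ) hA hx1' ∅ univ
    fun j _ V _ hjV ↦ by
      simpa using measureReal_inter_biInter_compl_le hA hx0 hx1' hprob hindep V j hjV
  have hpos : 0 < ∏ i, (1 - x i) := prod_pos fun i _ ↦ by linarith [hx1 i]
  simp only [union_empty, notMem_empty, Set.iInter_of_empty, Set.iInter_univ, probReal_univ,
    mul_one] at hchain
  exact pos_of_ne_zero fun h ↦ by simp [measureReal_def, h] at hchain; linarith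

/-- Symmetric Lovász Local Lemma: if each event `A i` has probability at most `p`,
each `A i` is mutually independent of all other events except those indexed by
`Γ i` with `|Γ i| ≤ D`, and `e p (D + 1) ≤ 1`, then with positive probability no
event `A i` occurs. -/
theorem lovasz_local_lemma {Ω : Type} [MeasurableSpace Ω]
    (μ : MeasureTheory.Measure Ω) [MeasureTheory.IsProbabilityMeasure μ]
    (n : ℕ) (A : Fin n → Set Ω) (hmeas : ∀ i, MeasurableSet (A i))
    (p : ℝ) (D : ℕ) (Γ : Fin n → Finset (Fin n)) (hΓ : ∀ i, (Γ i).card ≤ D)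
    (hprob : ∀ i, μ (A i) ≤ ENNReal.ofReal p)
    (hindep : ∀ i, ∀ J : Finset (Fin n), (∀ j ∈ J, j ≠ i ∧ j ∉ Γ i) →
      μ (A i ∩ ⋂ j ∈ J, (A j)ᶜ) = μ (A i) * μ (⋂ j ∈ J, (A j)ᶜ))
    (hcond : Real.exp 1 * p * ((D : ℝ) + 1) ≤ 1) :
    0 < μ (⋂ i, (A i)ᶜ) := by
  set x : ℝ := (D + 2 : ℝ)⁻¹
  have hx0 : 0 ≤ x := by positivity
  have hx1 : x < 1 := inv_lt_one_of_one_lt₀ (by linarith [D.cast_nonneg (α := ℝ)])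
  have hp : p ≤ x * (1 - x) ^ D := by
    refine le_trans ?_ (inv_exp_mul_le D)
    rw [← one_div, le_div_iff₀ (by positivity)]
    linarith
  refine lovasz_local_lemma_asymmetric μ A hmeas (fun _ ↦ x) (fun _ ↦ hx0) (fun _ ↦ hx1) Γ
    (fun i ↦ ?_) hindep
  calc μ.real (A i) ≤ x * (1 - x) ^ D :=
        ENNReal.toReal_le_of_le_ofReal (by positivity)
          ((hprob i).trans (ENNReal.ofReal_le_ofReal hp))
    _ ≤ x * ∏ _j ∈ Γ i, (1 - x) := by
        rw [prod_const]
        exact mul_le_mul_of_nonneg_left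
          (pow_le_pow_of_le_one (by linarith) (by linarith) (hΓ i)) hx0
end
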